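/- arXiv:2408.10049 — 2 statements merged into one kernel-verified Lean document; each statement's English description precedes it below -/
import Mathlib

section
/- The monoidal subcategory overline{Nec}₋ of the extended necklace category is generated, as a monoidal category, by the codegeneracy maps σ_i: Δ^{n+1} → Δ^n (0 ≤ i ≤ n), the coinert maps ν^{co}_{p,q}: Δ^{p+q} → Δ^p ∨ Δ^q (p,q > 0), and the composites ν^{co}_{p,q} ∘ δ_p: Δ^{p+q-1} → Δ^p ∨ Δ^q (p,q > 0). -/
def IsNeck (p : ℕ) (T : Finset ℕ) : Prop :=
  T ⊆ Finset.range (p + 1) ∧ 0 ∈ T ∧ p ∈ T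

/-- Wedge of necklaces. -/
def wedgeT (T : Finset ℕ) (p : ℕ) (U : Finset ℕ) : Finset ℕ :=
  T ∪ U.image (· + p)

/-- The class of morphisms of `overline{Nec}₋` generated, as a monoidal
category (i.e. under composition and wedge sum, together with all identities),
by the codegeneracies `σ_i : Δ^{n+1} → Δ^n`, the coinert maps
`ν^{co}_{a,b} : Δ^{a+b} → Δ^a ∨ Δ^b` and the composites
`ν^{co}_{a,b} ∘ δ_a : Δ^{a+b-1} → Δ^a ∨ Δ^b`.  A morphism of `overline{Nec}₋`
from `(T,p)` to `(U,q)` is recorded by its underlying map `f` (its component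
being the target `U`). -/
inductive GenMinus : ∀ (_p _q : ℕ) (_T _U : Finset ℕ), (ℕ → ℕ) → Prop
  | id (p : ℕ) (T : Finset ℕ) : GenMinus p p T T (fun x => x)
  | sigma (n i : ℕ) (h : i ≤ n) :
      GenMinus (n + 1) n {0, n + 1} {0, n} (fun x => if x ≤ i then x else x - 1)
  | nuco (a b : ℕ) (ha : 0 < a) (hb : 0 < b) :
      GenMinus (a + b) (a + b) {0, a + b} {0, a, a + b} (fun x => x)
  | nucoDelta (a b : ℕ) (ha : 0 < a) (hb : 0 < b) :
      GenMinus (a + b - 1) (a + b) {0, a + b - 1} {0, a, a + b}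
        (fun x => if x < a then x else x + 1)
  | comp {p q r : ℕ} {T U V : Finset ℕ} {f g : ℕ → ℕ} :
      GenMinus p q T U f → GenMinus q r U V g → GenMinus p r T V (fun x => g (f x))
  | wedge {p q p' q' : ℕ} {T U T' U' : Finset ℕ} {f f' : ℕ → ℕ} :
      GenMinus p q T U f → GenMinus p' q' T' U' f' →
      GenMinus (p + p') (q + q') (wedgeT T p T') (wedgeT U q U')
        (fun x => if x ≤ p then f x else q + f' (x - p))

/-!
Splitting the source necklace at its first joint `t` writes a morphism `f : (T, p) → (U, q)`
as the wedge of its restrictions `[0, t] → [0, f t]` and `[t, p] → [f t, q]`, so it suffices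
to treat a single bead `Δ^p → (U, q)`. If `U = {0, q}`, the map is a monotone surjection
`[p] → [q]`, hence a composite of codegeneracies. Otherwise let `v` be the first interior joint
of `U`. If `f` hits `v`, then `f` factors through `(U \ {v}, q)`, and `v` is put back by
`ν^co ∨ id`. If `f` misses `v`, collapsing the gap at `v` gives a morphism into a necklace of
length `q - 1`, followed by `(ν^co ∘ δ) ∨ id`. Both cases lower the number of joints of `U`.
-/

section
open Finset

lemma MonotoneOn.apply_le_of_le_Iic {f : ℕ → ℕ} {p x y : ℕ} (h : MonotoneOn f (Set.Iic p))
    (hxy : x ≤ y) (hy : y ≤ p) : f x ≤ f y :=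
  h (Set.mem_Iic.2 (hxy.trans hy)) (Set.mem_Iic.2 hy) hxy


lemma mem_wedgeT {A B : Finset ℕ} {a x : ℕ} :
    x ∈ wedgeT A a B ↔ x ∈ A ∨ ∃ y ∈ B, y + a = x := by
  simp [wedgeT]

def dropUntil (t : ℕ) (T : Finset ℕ) : Finset ℕ :=
  (T.filter (t ≤ ·)).image (· - t)

lemma mem_dropUntil {t x : ℕ} {T : Finset ℕ} : x ∈ dropUntil t T ↔ x + t ∈ T := by
  simp only [dropUntil, mem_image, mem_filter]
  constructor
  · rintro ⟨y, ⟨hy, hty⟩, rfl⟩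
    rwa [Nat.sub_add_cancel hty]
  · exact fun h => ⟨x + t, ⟨h, by omega⟩, by omega⟩

lemma wedgeT_filter_le_dropUntil (T : Finset ℕ) (t : ℕ) :
    wedgeT (T.filter (· ≤ t)) t (dropUntil t T) = T := by
  ext x
  simp only [mem_wedgeT, mem_filter, mem_dropUntil]
  constructor
  · rintro (⟨hx, -⟩ | ⟨y, hy, rfl⟩) <;> assumption
  · intro hx
    rcases le_or_gt x t with h | h
    · exact Or.inl ⟨hx, h⟩
    · exact Or.inr ⟨x - t, by rwa [Nat.sub_add_cancel h.le], Nat.sub_add_cancel h.le⟩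

lemma wedgeT_assoc (A B C : Finset ℕ) (a b : ℕ) :
    wedgeT (wedgeT A a B) (a + b) C = wedgeT A a (wedgeT B b C) := by
  simp only [wedgeT, image_union, image_image, union_assoc]
  congr 3
  ext x
  simp only [Function.comp_apply]
  omega

lemma card_wedgeT_pair {a : ℕ} {B : Finset ℕ} (ha : 0 < a) (hB : 0 ∈ B) :
    (wedgeT {0, a} a B).card = B.card + 1 := by
  have : wedgeT {0, a} a B = insert 0 (B.image (· + a)) := by
    ext x
    simp only [mem_wedgeT, mem_insert, mem_singleton, mem_image]
    constructor
    · rintro ((rfl | rfl) | h)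
      exacts [Or.inl rfl, Or.inr ⟨0, hB, zero_add _⟩, Or.inr h]
    · rintro (rfl | h)
      exacts [Or.inl (Or.inl rfl), Or.inr h]
  rw [this, card_insert_of_notMem (by simp; omega),
    card_image_of_injective _ (add_left_injective a)]

lemma card_dropUntil_lt {t : ℕ} {T : Finset ℕ} (h0 : 0 ∈ T) (ht : 0 < t) :
    (dropUntil t T).card < T.card :=
  card_image_le.trans_lt (card_lt_card (filter_ssubset.2 ⟨0, h0, by omega⟩))

lemma isNeck_pair (p : ℕ) : IsNeck p {0, p} :=
  ⟨by intro x; simp only [mem_insert, mem_singleton, mem_range]; omega, by simp, by simp⟩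

namespace IsNeck

variable {p t : ℕ} {T : Finset ℕ}

lemma le (h : IsNeck p T) (ht : t ∈ T) : t ≤ p :=
  Nat.lt_succ_iff.1 (mem_range.1 (h.1 ht))

lemma filter_le (h : IsNeck p T) (ht : t ∈ T) : IsNeck t (T.filter (· ≤ t)) :=
  ⟨fun _ hx => mem_range.2 (Nat.lt_succ_of_le (mem_filter.1 hx).2),
    mem_filter.2 ⟨h.2.1, Nat.zero_le t⟩, mem_filter.2 ⟨ht, le_rfl⟩⟩

lemma dropUntil (h : IsNeck p T) (ht : t ∈ T) : IsNeck (p - t) (dropUntil t T) := by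
  refine ⟨fun x hx => ?_, ?_, ?_⟩
  · have := h.le (mem_dropUntil.1 hx)
    rw [mem_range]
    omega
  · rwa [mem_dropUntil, zero_add]
  · rw [mem_dropUntil, Nat.sub_add_cancel (h.le ht)]
    exact h.2.2

lemma wedgeT {a b : ℕ} {A B : Finset ℕ} (hA : IsNeck a A) (hB : IsNeck b B) :
    IsNeck (a + b) (wedgeT A a B) := by
  refine ⟨fun x hx => ?_, mem_wedgeT.2 (Or.inl hA.2.1),
    mem_wedgeT.2 (Or.inr ⟨b, hB.2.2, add_comm b a⟩)⟩
  rw [mem_range]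
  rcases mem_wedgeT.1 hx with hx | ⟨y, hy, rfl⟩
  · have := hA.le hx; omega
  · have := hB.le hy; omega

lemma exists_first_bead (h : IsNeck p T) (hp : 0 < p) :
    ∃ t ∈ T, 0 < t ∧ T.filter (· ≤ t) = {0, t} := by
  have hne : (T.erase 0).Nonempty := ⟨p, mem_erase.2 ⟨hp.ne', h.2.2⟩⟩
  obtain ⟨htne, htT⟩ := mem_erase.1 ((T.erase 0).min'_mem hne)
  refine ⟨_, htT, Nat.pos_of_ne_zero htne, ?_⟩
  ext x
  simp only [mem_filter, mem_insert, mem_singleton]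
  constructor
  · rintro ⟨hx, hxt⟩
    by_contra! hx0
    exact absurd ((T.erase 0).min'_le x (mem_erase.2 ⟨hx0.1, hx⟩)) (by omega)
  · rintro (rfl | rfl)
    exacts [⟨h.2.1, Nat.zero_le _⟩, ⟨htT, le_rfl⟩]

lemma eq_pair_or_exists_first_bead (h : IsNeck p T) :
    T = {0, p} ∨ ∃ t ∈ T, 0 < t ∧ t < p ∧ T.filter (· ≤ t) = {0, t} := by
  rcases Nat.eq_zero_or_pos p with rfl | hp
  · rw [pair_eq_singleton]
    exact Or.inl (eq_singleton_iff_unique_mem.2 ⟨h.2.1, fun x hx => Nat.le_zero.1 (h.le hx)⟩)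
  obtain ⟨t, htT, ht0, hfirst⟩ := h.exists_first_bead hp
  rcases (h.le htT).lt_or_eq with htp | rfl
  · exact Or.inr ⟨t, htT, ht0, htp, hfirst⟩
  · left
    rw [← hfirst, filter_true_of_mem fun x hx => h.le hx]

lemma exists_eq_wedgeT_triple {q : ℕ} {U : Finset ℕ} (h : IsNeck q U) (hU : U ≠ {0, q}) :
    ∃ v m r R, 0 < v ∧ 0 < m ∧ q = v + m + r ∧ IsNeck r R ∧
      U = _root_.wedgeT {0, v, v + m} (v + m) R := by
  obtain rfl | ⟨v, hvU, hv, hvq, hfirst⟩ := h.eq_pair_or_exists_first_bead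
  · exact absurd rfl hU
  have hD := h.dropUntil hvU
  obtain ⟨m, hmD, hm, hfirst'⟩ := hD.exists_first_bead (by omega)
  have hR := hD.dropUntil hmD
  have hmq := hD.le hmD
  refine ⟨v, m, _, _, hv, hm, by omega, hR, ?_⟩
  conv_lhs => rw [← wedgeT_filter_le_dropUntil U v, hfirst,
    ← wedgeT_filter_le_dropUntil (_root_.dropUntil v U) m, hfirst']
  rw [← wedgeT_assoc]
  congr 1
  ext x
  simp only [mem_wedgeT, mem_insert, mem_singleton, exists_eq_or_imp, zero_add, existsAndEq,
    true_and]
  omega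

end IsNeck

/-- Only the values on `[0, p]` of the underlying map of a morphism of necklaces matter. -/
def GenMinusOn (p q : ℕ) (T U : Finset ℕ) (f : ℕ → ℕ) : Prop :=
  ∃ g : ℕ → ℕ, (∀ i ≤ p, g i = f i) ∧ GenMinus p q T U g

lemma GenMinus.genMinusOn {p q : ℕ} {T U : Finset ℕ} {f : ℕ → ℕ}
    (h : GenMinus p q T U f) : GenMinusOn p q T U f :=
  ⟨f, fun _ _ => rfl, h⟩

namespace GenMinusOn

variable {p q r : ℕ} {T U V : Finset ℕ} {f g : ℕ → ℕ}

lemma congr (h : GenMinusOn p q T U f) (hfg : ∀ i ≤ p, f i = g i) : GenMinusOn p q T U g :=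
  let ⟨f', hf', hgen⟩ := h
  ⟨f', fun i hi => (hf' i hi).trans (hfg i hi), hgen⟩

lemma comp (hf : GenMinusOn p q T U f) (hg : GenMinusOn q r U V g) (hfq : ∀ i ≤ p, f i ≤ q) :
    GenMinusOn p r T V (fun x => g (f x)) := by
  obtain ⟨f', hf', hgenf⟩ := hf
  obtain ⟨g', hg', hgeng⟩ := hg
  refine ⟨_, fun i hi => ?_, hgenf.comp hgeng⟩
  rw [hf' i hi, hg' _ (hfq i hi)]

lemma wedge {p' q' : ℕ} {T' U' : Finset ℕ} {f' : ℕ → ℕ} (hf : GenMinusOn p q T U f)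
    (hf' : GenMinusOn p' q' T' U' f') :
    GenMinusOn (p + p') (q + q') (wedgeT T p T') (wedgeT U q U')
      (fun x => if x ≤ p then f x else q + f' (x - p)) := by
  obtain ⟨g, hg, hgen⟩ := hf
  obtain ⟨g', hg', hgen'⟩ := hf'
  refine ⟨_, fun i hi => ?_, hgen.wedge hgen'⟩
  dsimp only
  split_ifs with h
  · exact hg i h
  · rw [hg' _ (by omega)]

section

variable {p v m r : ℕ} {T R : Finset ℕ} {f : ℕ → ℕ}

lemma insert_joint (hv : 0 < v) (hm : 0 < m) (hfq : ∀ x ≤ p, f x ≤ v + m + r)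
    (h : GenMinusOn p (v + m + r) T (wedgeT {0, v + m} (v + m) R) f) :
    GenMinusOn p (v + m + r) T (wedgeT {0, v, v + m} (v + m) R) f :=
  (h.comp ((GenMinus.nuco v m hv hm).wedge (GenMinus.id r R)).genMinusOn hfq).congr
    fun x _ => by split_ifs <;> omega

lemma of_collapse_joint (hv : 0 < v) (hm : 0 < m) (hmiss : ∀ x ≤ p, f x ≠ v)
    (hfq : ∀ x ≤ p, f x ≤ v + m + r)
    (h : GenMinusOn p (v + m - 1 + r) T (wedgeT {0, v + m - 1} (v + m - 1) R)
      (fun x => if f x < v then f x else f x - 1)) :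
    GenMinusOn p (v + m + r) T (wedgeT {0, v, v + m} (v + m) R) f := by
  refine (h.comp ((GenMinus.nucoDelta v m hv hm).wedge (GenMinus.id r R)).genMinusOn
    fun x hx => ?_).congr fun x hx => ?_
  · have := hfq x hx
    split_ifs <;> omega
  · have := hmiss x hx
    split_ifs <;> omega

end

end GenMinusOn

lemma apply_eq_self_of_surjOn {p q : ℕ} {f : ℕ → ℕ} (hmono : MonotoneOn f (Set.Iic p))
    (hf0 : f 0 = 0) (hfp : f p = q) (hsurj : ∀ y ≤ q, ∃ x ≤ p, f x = y)
    (hstep : ∀ i < p, f i ≠ f (i + 1)) : ∀ x ≤ p, f x = x := by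
  intro x hx
  induction x with
  | zero => exact hf0
  | succ x ih =>
    have hfx := ih (by omega)
    have hlt : x < f (x + 1) := by
      have := (hmono.apply_le_of_le_Iic (Nat.le_add_right x 1) hx).lt_of_ne (hstep x (by omega))
      omega
    have hle : f (x + 1) ≤ q := hfp ▸ hmono.apply_le_of_le_Iic hx le_rfl
    obtain ⟨y, hy, hfy⟩ := hsurj (x + 1) (by omega)
    have hxy : x + 1 ≤ y := by
      by_contra! hyx
      have := hmono.apply_le_of_le_Iic (Nat.le_of_lt_succ hyx) (by omega)
      omega
    have := hmono.apply_le_of_le_Iic hxy hy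
    omega

theorem genMinusOn_of_surjOn {p q : ℕ} {f : ℕ → ℕ} (hmono : MonotoneOn f (Set.Iic p))
    (hf0 : f 0 = 0) (hfp : f p = q) (hsurj : ∀ y ≤ q, ∃ x ≤ p, f x = y) :
    GenMinusOn p q {0, p} {0, q} f := by
  by_cases hcollapse : ∃ i < p, f i = f (i + 1)
  · obtain ⟨i, hi, hfi⟩ := hcollapse
    obtain ⟨n, rfl⟩ : ∃ n, p = n + 1 := ⟨p - 1, by omega⟩
    -- `f = f' ∘ σ_i` with `f' = f ∘ δ_{i+1}`
    set δ : ℕ → ℕ := fun x => if x ≤ i then x else x + 1 with hδ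
    have hf' : GenMinusOn n q {0, n} {0, q} (fun x => f (δ x)) := by
      refine genMinusOn_of_surjOn (fun x hx y hy hxy => ?_) (by simp [hδ, hf0]) ?_ ?_
      · simp only [Set.mem_Iic] at hx hy
        exact hmono.apply_le_of_le_Iic (by simp only [hδ]; split_ifs <;> omega)
          (by simp only [hδ]; split_ifs <;> omega)
      · simp only [hδ]
        split_ifs with hni
        · rw [← hfp, show n = i by omega, hfi]
        · exact hfp
      · intro y hy
        obtain ⟨x, hx, rfl⟩ := hsurj y hy
        rcases lt_trichotomy x (i + 1) with hxi | rfl | hxi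
        · exact ⟨x, by omega, by simp only [hδ]; rw [if_pos (by omega)]⟩
        · exact ⟨i, by omega, by simp only [hδ]; rw [if_pos le_rfl, hfi]⟩
        · refine ⟨x - 1, by omega, ?_⟩
          simp only [hδ]
          rw [if_neg (by omega), Nat.sub_add_cancel (by omega)]
    refine ((GenMinus.sigma n i (by omega)).genMinusOn.comp hf' (fun x _ => ?_)).congr
      fun x hx => ?_
    · split_ifs <;> omega
    · simp only [hδ]
      split_ifs <;> first
        | rfl
        | (congr 1; omega)
        | (obtain rfl : x = i + 1 := by omega
           simpa using hfi)
  · push Not at hcollapse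
    have hid := apply_eq_self_of_surjOn hmono hf0 hfp hsurj hcollapse
    obtain rfl : q = p := hfp ▸ hid p le_rfl
    exact (GenMinus.id q {0, q}).genMinusOn.congr fun x hx => (hid x hx).symm
termination_by p

/-- The underlying map `f` of a morphism `(f, U) : (T, p) → (U, q)` of `overline{Nec}₋`. -/
structure IsNecMinusHom (p q : ℕ) (T U : Finset ℕ) (f : ℕ → ℕ) : Prop where
  src : IsNeck p T
  tgt : IsNeck q U
  mono : MonotoneOn f (Set.Iic p)
  map_zero : f 0 = 0
  map_last : f p = q
  mapsTo : ∀ t ∈ T, f t ∈ U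
  cover : ∀ y ≤ q, y ∈ U ∨ ∃ x ≤ p, f x = y

namespace IsNecMinusHom

section

variable {p q t : ℕ} {T U : Finset ℕ} {f : ℕ → ℕ}

lemma le_last (hf : IsNecMinusHom p q T U f) {x : ℕ} (hx : x ≤ p) : f x ≤ q :=
  hf.map_last ▸ hf.mono.apply_le_of_le_Iic hx le_rfl

lemma restrict_lower (hf : IsNecMinusHom p q T U f) (ht : t ∈ T) :
    IsNecMinusHom t (f t) (T.filter (· ≤ t)) (U.filter (· ≤ f t)) f where
  src := hf.src.filter_le ht
  tgt := hf.tgt.filter_le (hf.mapsTo t ht)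
  mono := hf.mono.mono (Set.Iic_subset_Iic.2 (hf.src.le ht))
  map_zero := hf.map_zero
  map_last := rfl
  mapsTo s hs := by
    obtain ⟨hsT, hst⟩ := mem_filter.1 hs
    exact mem_filter.2 ⟨hf.mapsTo s hsT, hf.mono.apply_le_of_le_Iic hst (hf.src.le ht)⟩
  cover y hy := by
    rcases hf.cover y (hy.trans (hf.le_last (hf.src.le ht))) with hyU | ⟨x, hx, rfl⟩
    · exact Or.inl (mem_filter.2 ⟨hyU, hy⟩)
    · rcases le_or_gt x t with hxt | htx
      · exact Or.inr ⟨x, hxt, rfl⟩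
      · exact Or.inr ⟨t, le_rfl, le_antisymm (hf.mono.apply_le_of_le_Iic htx.le hx) hy⟩

lemma restrict_upper (hf : IsNecMinusHom p q T U f) (ht : t ∈ T) :
    IsNecMinusHom (p - t) (q - f t) (dropUntil t T) (dropUntil (f t) U)
      (fun x => f (x + t) - f t) where
  src := hf.src.dropUntil ht
  tgt := hf.tgt.dropUntil (hf.mapsTo t ht)
  mono x _ y hy hxy := by
    have htp := hf.src.le ht
    have := hf.mono.apply_le_of_le_Iic (Nat.add_le_add_right hxy t)
      (by simp only [Set.mem_Iic] at hy; omega)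
    exact Nat.sub_le_sub_right this _
  map_zero := by simp
  map_last := by rw [Nat.sub_add_cancel (hf.src.le ht), hf.map_last]
  mapsTo s hs := by
    have hsT := mem_dropUntil.1 hs
    have hle := hf.mono.apply_le_of_le_Iic (Nat.le_add_left t s) (hf.src.le hsT)
    rw [mem_dropUntil, Nat.sub_add_cancel hle]
    exact hf.mapsTo _ hsT
  cover y hy := by
    have htp := hf.src.le ht
    have hftq := hf.le_last htp
    rcases hf.cover (y + f t) (by omega) with hyU | ⟨x, hx, hfx⟩
    · exact Or.inl (mem_dropUntil.2 hyU)
    · rcases le_or_gt t x with htx | hxt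
      · refine Or.inr ⟨x - t, by omega, ?_⟩
        rw [Nat.sub_add_cancel htx, hfx, Nat.add_sub_cancel]
      · have := hf.mono.apply_le_of_le_Iic hxt.le htp
        exact Or.inr ⟨0, Nat.zero_le _, by rw [zero_add, Nat.sub_self]; omega⟩

lemma genMinusOn_of_restrict (hf : IsNecMinusHom p q T U f) (ht : t ∈ T)
    (hlower : GenMinusOn t (f t) (T.filter (· ≤ t)) (U.filter (· ≤ f t)) f)
    (hupper : GenMinusOn (p - t) (q - f t) (dropUntil t T) (dropUntil (f t) U)
      (fun x => f (x + t) - f t)) :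
    GenMinusOn p q T U f := by
  have htp := hf.src.le ht
  have hftq := hf.le_last htp
  have h := hlower.wedge hupper
  rw [Nat.add_sub_cancel' htp, Nat.add_sub_cancel' hftq, wedgeT_filter_le_dropUntil,
    wedgeT_filter_le_dropUntil] at h
  refine h.congr fun i hi => ?_
  split_ifs with hit
  · rfl
  · have := hf.mono.apply_le_of_le_Iic (le_of_not_ge hit) hi
    rw [Nat.sub_add_cancel (by omega)]
    omega

lemma of_pair_source (hU : IsNeck q U) (hmono : MonotoneOn f (Set.Iic p)) (hf0 : f 0 = 0)
    (hfp : f p = q) (hcover : ∀ y ≤ q, y ∈ U ∨ ∃ x ≤ p, f x = y) :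
    IsNecMinusHom p q {0, p} U f where
  src := isNeck_pair p
  tgt := hU
  mono := hmono
  map_zero := hf0
  map_last := hfp
  mapsTo t ht := by
    rcases mem_insert.1 ht with rfl | ht
    · rw [hf0]; exact hU.2.1
    · rw [mem_singleton.1 ht, hfp]; exact hU.2.2
  cover := hcover

lemma of_insert {v : ℕ} (hf : IsNecMinusHom p q {0, p} (insert v U) f) (hU : IsNeck q U)
    (hv : ∃ x ≤ p, f x = v) : IsNecMinusHom p q {0, p} U f :=
  of_pair_source hU hf.mono hf.map_zero hf.map_last fun y hy => by
    rcases hf.cover y hy with hyU | hy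
    · rcases mem_insert.1 hyU with rfl | hyU
      exacts [Or.inr hv, Or.inl hyU]
    · exact Or.inr hy

lemma collapse {v m r : ℕ} {R : Finset ℕ} (hv : 0 < v) (hm : 0 < m) (hR : IsNeck r R)
    (hf : IsNecMinusHom p (v + m + r) {0, p} (wedgeT {0, v, v + m} (v + m) R) f) :
    IsNecMinusHom p (v + m - 1 + r) {0, p} (wedgeT {0, v + m - 1} (v + m - 1) R)
      (fun x => if f x < v then f x else f x - 1) := by
  refine of_pair_source ((isNeck_pair _).wedgeT hR) (fun x hx y hy hxy => ?_)
    (by simp [hf.map_zero, hv]) (by rw [if_neg (by rw [hf.map_last]; omega), hf.map_last]; omega)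
    fun y hy => ?_
  · have := hf.mono hx hy hxy
    split_ifs <;> omega
  simp only [mem_wedgeT, mem_insert, mem_singleton]
  rcases lt_or_ge y v with hyv | hyv
  · rcases hf.cover y (by omega) with hyU | ⟨x, hx, hfx⟩
    · simp only [mem_wedgeT, mem_insert, mem_singleton] at hyU
      left; left
      rcases hyU with (h | h | h) | ⟨z, -, hz⟩ <;> omega
    · exact Or.inr ⟨x, hx, by rw [if_pos (hfx ▸ hyv), hfx]⟩
  · rcases hf.cover (y + 1) (by omega) with hyU | ⟨x, hx, hfx⟩
    · simp only [mem_wedgeT, mem_insert, mem_singleton] at hyU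
      rcases hyU with hyU | ⟨z, hz, hzy⟩
      · exact Or.inl (Or.inl (by omega))
      · refine Or.inl (Or.inr ⟨z, hz, ?_⟩)
        omega
    · exact Or.inr ⟨x, hx, by rw [if_neg (by omega), hfx]; rfl⟩

end

theorem genMinusOn_of_pair {p q : ℕ} {U : Finset ℕ} {f : ℕ → ℕ}
    (hf : IsNecMinusHom p q {0, p} U f) : GenMinusOn p q {0, p} U f := by
  by_cases hpair : U = {0, q}
  · subst hpair
    refine genMinusOn_of_surjOn hf.mono hf.map_zero hf.map_last fun y hy => ?_
    rcases hf.cover y hy with hyU | hy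
    · rcases mem_insert.1 hyU with rfl | hyU
      · exact ⟨0, Nat.zero_le p, hf.map_zero⟩
      · exact ⟨p, le_rfl, (mem_singleton.1 hyU).symm ▸ hf.map_last⟩
    · exact hy
  obtain ⟨v, m, r, R, hv, hm, rfl, hR, rfl⟩ := hf.tgt.exists_eq_wedgeT_triple hpair
  have hinsert : wedgeT {0, v, v + m} (v + m) R = insert v (wedgeT {0, v + m} (v + m) R) := by
    simp only [wedgeT, insert_union, insert_comm 0 v]
  have hcard : (wedgeT {0, v + m} (v + m) R).card < (wedgeT {0, v, v + m} (v + m) R).card := by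
    rw [hinsert, card_insert_of_notMem]
    · omega
    · simp only [mem_wedgeT, mem_insert, mem_singleton]
      omega
  by_cases hhit : ∃ x ≤ p, f x = v
  · have hf' := hf
    rw [hinsert] at hf'
    exact (genMinusOn_of_pair (hf'.of_insert ((isNeck_pair _).wedgeT hR) hhit)).insert_joint
      hv hm fun _ => hf.le_last
  · push Not at hhit
    have hcard' : (wedgeT {0, v + m - 1} (v + m - 1) R).card
        < (wedgeT {0, v, v + m} (v + m) R).card := by
      have := card_wedgeT_pair (a := v + m - 1) (by omega) hR.2.1
      have := card_wedgeT_pair (a := v + m) (by omega) hR.2.1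
      omega
    exact (genMinusOn_of_pair (hf.collapse hv hm hR)).of_collapse_joint hv hm hhit
      fun _ => hf.le_last
termination_by U.card

theorem genMinusOn {p q : ℕ} {T U : Finset ℕ} {f : ℕ → ℕ} (hf : IsNecMinusHom p q T U f) :
    GenMinusOn p q T U f := by
  obtain rfl | ⟨t, htT, ht0, -, hfirst⟩ := hf.src.eq_pair_or_exists_first_bead
  · exact hf.genMinusOn_of_pair
  have hcard := card_dropUntil_lt hf.src.2.1 ht0
  refine hf.genMinusOn_of_restrict htT ?_ (genMinusOn (hf.restrict_upper htT))
  have hlower := hf.restrict_lower htT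
  rw [hfirst] at hlower ⊢
  exact hlower.genMinusOn_of_pair
termination_by T.card

end IsNecMinusHom

end

/-- The monoidal subcategory `overline{Nec}₋` of the extended necklace category
is generated as a monoidal category by the maps `σ_i : Δ^{n+1} → Δ^n`
(`0 ≤ i ≤ n`), `ν^{co}_{a,b} : Δ^{a+b} → Δ^a ∨ Δ^b` and
`ν^{co}_{a,b} ∘ δ_a : Δ^{a+b-1} → Δ^a ∨ Δ^b` (`a, b > 0`): every morphism
`(f,U) : (T,p) → (U,q)` of `overline{Nec}₋` (so `f(T) ⊆ U` and
`U ∪ f([p]) = [q]`) lies in the generated class. -/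
theorem extNecklace_minus_generated
    (p q : ℕ) (T U : Finset ℕ) (hT : IsNeck p T) (hU : IsNeck q U)
    (f : ℕ → ℕ) (hmono : MonotoneOn f (Set.Iic p)) (hf0 : f 0 = 0) (hfp : f p = q)
    (hTf : ∀ t ∈ T, f t ∈ U) (hcover : ∀ y ≤ q, y ∈ U ∨ ∃ x ≤ p, f x = y) :
    ∃ g : ℕ → ℕ, (∀ i ≤ p, g i = f i) ∧ GenMinus p q T U g :=
  IsNecMinusHom.genMinusOn ⟨hT, hU, hmono, hf0, hfp, hTf, hcover⟩
end

section
/- For every necklace T and every permutation τ of the complement T^c, the coefficients λ^T_τ = (−1)^{dim(T)} sgn(τ) give the unique solution to the system: (i) λ^T_τ = λ^{T'}_{στσ^{-1}} for every spine collapsing map σ: T → T'; (ii) λ^{T₁∨T₂}_{τ₁*τ₂} = λ^{T₁}_{τ₁} λ^{T₂}_{τ₂} and λ^{Δ⁰}_{id} = 1; (iii) λ^T_{τ∘(i_l,i_{l+1})} = −λ^T_τ for adjacent transpositions of T^c; (iv) λ^T_{(ρ|j)} = (−1)^{n+j−1} λ^{δ_{i_j}^{-1}(T)}_ρ where n = dim(T)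 and (ρ|j) is the permutation inserting i_j in last position; (v) λ^T_{(j|θ)} = (−1)^j λ^{T∪{i_j}}_θ where (j|θ) inserts i_j in first position. -/
/-- The dimension of a necklace `(T,p)`. -/
abbrev cdim (p : ℕ) (T : Finset ℕ) : ℕ := (Finset.range (p + 1) \ T).card

/-- The enumeration `i_1 < i_2 < …` of the complement `T^c = [p] \ T`,
as an order isomorphism `Fin (dim T) ≃o T^c` (positions are 0-indexed). -/
noncomputable def en (p : ℕ) (T : Finset ℕ) :
    Fin (cdim p T) ≃o {x // x ∈ Finset.range (p + 1) \ T} :=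
  (Finset.range (p + 1) \ T).orderIsoOfFin rfl

/-- The joint set `δ_i^{-1}(T)` of the face necklace obtained by deleting the
vertex `i ∉ T`. -/
def faceSet (T : Finset ℕ) (i : ℕ) : Finset ℕ :=
  T.filter (· < i) ∪ (T.filter (fun x => i < x)).image (· - 1)

/-- A family of coefficients `λ^T_τ ∈ ℤ`, indexed by necklaces `T` and
permutations `τ` of the complement `T^c` (identified with `Fin (dim T)` via the
order-preserving enumeration). -/
def LamFam : Type := ∀ (p : ℕ) (T : Finset ℕ), IsNeck p T → Equiv.Perm (Fin (cdim p T)) → ℤ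

/-- (i) `λ^T_τ = λ^{T'}_{στσ⁻¹}` for every spine collapsing (active surjective)
map `σ : T → T'`; the order-preserving bijection `T^c ≅ (T')^c` induced by `σ`
corresponds under the enumerations to the identity of `Fin (dim T)`. -/
def CondSpineCollapse (μ : LamFam) : Prop :=
  ∀ (p q : ℕ) (T U : Finset ℕ) (hT : IsNeck p T) (hU : IsNeck q U) (σ : ℕ → ℕ),
    MonotoneOn σ (Set.Iic p) → σ 0 = 0 → σ p = q →
    (∀ y ≤ q, ∃ x ≤ p, σ x = y) → U = T.image σ →
    (∀ i, i < p → σ i = σ (i + 1) → i ∈ T ∧ (i + 1) ∈ T) →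
    ∀ (h : cdim p T = cdim q U) (τ : Equiv.Perm (Fin (cdim p T))),
      μ p T hT τ = μ q U hU ((finCongr h).permCongr τ)

/-- (ii) `λ^{T₁∨T₂}_{τ₁*τ₂} = λ^{T₁}_{τ₁} · λ^{T₂}_{τ₂}`, the juxtaposition
`τ₁*τ₂` being the image of `(τ₁,τ₂)` under
`S(T₁^c) × S(T₂^c) ↪ S((T₁∨T₂)^c)`. -/
def CondWedge (μ : LamFam) : Prop :=
  ∀ (p q : ℕ) (T₁ T₂ : Finset ℕ) (h₁ : IsNeck p T₁) (h₂ : IsNeck q T₂)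
    (hw : IsNeck (p + q) (wedgeT T₁ p T₂))
    (h : cdim p T₁ + cdim q T₂ = cdim (p + q) (wedgeT T₁ p T₂))
    (τ₁ : Equiv.Perm (Fin (cdim p T₁))) (τ₂ : Equiv.Perm (Fin (cdim q T₂))),
    μ (p + q) (wedgeT T₁ p T₂) hw
        ((finCongr h).permCongr (finSumFinEquiv.permCongr (Equiv.sumCongr τ₁ τ₂))) =
      μ p T₁ h₁ τ₁ * μ q T₂ h₂ τ₂

/-- (ii') `λ^{Δ⁰}_{id} = 1`. -/
def CondUnit (μ : LamFam) : Prop :=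
  ∀ (h : IsNeck 0 {0}) (τ : Equiv.Perm (Fin (cdim 0 {0}))), μ 0 {0} h τ = 1

/-- (iii) `λ^T_{τ∘(i_l, i_{l+1})} = -λ^T_τ` for adjacent transpositions of
`T^c` (consecutive positions `a`, `a+1`). -/
def CondSwap (μ : LamFam) : Prop :=
  ∀ (p : ℕ) (T : Finset ℕ) (hT : IsNeck p T) (τ : Equiv.Perm (Fin (cdim p T)))
    (a b : Fin (cdim p T)), (b : ℕ) = (a : ℕ) + 1 →
    μ p T hT (τ * Equiv.swap a b) = - μ p T hT τ

/-- (iv) `λ^T_{(ρ|j)} = (-1)^{n+j-1} λ^{δ_{i_j}^{-1}(T)}_ρ`, where `n = dim T`,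
`i_j` is the `j`-th element of `T^c` (0-indexed position `j0`), and `(ρ|j)` is
the permutation placing `i_j` in last position: under the enumerations,
`(ρ|j)(last) = j0` and `(ρ|j)(castSucc k) = succAbove j0 (ρ k)`. -/
def CondFace (μ : LamFam) : Prop :=
  ∀ (p : ℕ) (T : Finset ℕ) (hT : IsNeck p T) (m : ℕ) (hm : cdim p T = m + 1)
    (j0 : Fin (cdim p T))
    (hT' : IsNeck (p - 1) (faceSet T ((en p T j0 : ℕ))))
    (hm' : cdim (p - 1) (faceSet T ((en p T j0 : ℕ))) = m)
    (ρ : Equiv.Perm (Fin (cdim (p - 1) (faceSet T ((en p T j0 : ℕ))))))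
    (π : Equiv.Perm (Fin (cdim p T))),
    ((finCongr hm).permCongr π) (Fin.last m) = finCongr hm j0 →
    (∀ kk : Fin m, ((finCongr hm).permCongr π) (Fin.castSucc kk) =
        (finCongr hm j0).succAbove (((finCongr hm').permCongr ρ) kk)) →
    μ p T hT π =
      (-1) ^ (m + (j0 : ℕ) + 1) * μ (p - 1) (faceSet T ((en p T j0 : ℕ))) hT' ρ

/-- (v) `λ^T_{(j|θ)} = (-1)^j λ^{T∪{i_j}}_θ`, where `(j|θ)` places `i_j` in
first position: under the enumerations, `(j|θ)(0) = j0` and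
`(j|θ)(succ k) = succAbove j0 (θ k)`. -/
def CondInsert (μ : LamFam) : Prop :=
  ∀ (p : ℕ) (T : Finset ℕ) (hT : IsNeck p T) (m : ℕ) (hm : cdim p T = m + 1)
    (j0 : Fin (cdim p T))
    (hT'' : IsNeck p (insert ((en p T j0 : ℕ)) T))
    (hm'' : cdim p (insert ((en p T j0 : ℕ)) T) = m)
    (θ : Equiv.Perm (Fin (cdim p (insert ((en p T j0 : ℕ)) T))))
    (π : Equiv.Perm (Fin (cdim p T))),
    ((finCongr hm).permCongr π) 0 = finCongr hm j0 →
    (∀ kk : Fin m, ((finCongr hm).permCongr π) (Fin.succ kk) =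
        (finCongr hm j0).succAbove (((finCongr hm'').permCongr θ) kk)) →
    μ p T hT π = (-1) ^ ((j0 : ℕ) + 1) * μ p (insert ((en p T j0 : ℕ)) T) hT'' θ

/-- The full system of equations (i)–(v). -/
def Sys (μ : LamFam) : Prop :=
  CondSpineCollapse μ ∧ CondWedge μ ∧ CondUnit μ ∧ CondSwap μ ∧ CondFace μ ∧
    CondInsert μ

/-- The family `λ^T_τ = (-1)^{dim T} · sgn(τ)`. -/
def lamStd : LamFam := fun p T _ τ => (-1) ^ (cdim p T) * ((Equiv.Perm.sign τ : ℤˣ) : ℤ)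


/-! Existence: each equation is a sign identity. The only nontrivial ones, (iv) and (v), say
that putting `i_j` in first position multiplies the sign by `(-1)^j` (compose with the cycle
`(0 1 … j)`), and putting it in last position by `(-1)^(n-1+j)`.

Uniqueness: by induction on `dim T`, using only (i), (ii') and (v). Every `τ` is `(j|θ)` with
`i_j = τ(i_1)`, so (v) expresses `λ^T_τ` through a necklace of smaller dimension; a necklace of
dimension `0` spine collapses onto `Δ⁰`. -/

open Equiv Equiv.Perm

theorem sign_of_apply_zero_of_apply_succ {m : ℕ} {π : Perm (Fin (m + 1))} {j : Fin (m + 1)}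
    {e : Perm (Fin m)} (h0 : π 0 = j) (hs : ∀ k, π k.succ = j.succAbove (e k)) :
    sign π = (-1) ^ (j : ℕ) * sign e := by
  have hπ : j.cycleRange * π = decomposeFin.symm (0, e) := by
    ext x
    cases x using Fin.cases <;> simp [h0, hs]
  have h := congrArg sign hπ
  rw [Perm.sign_mul, Fin.sign_cycleRange, decomposeFin.symm_sign, if_pos rfl, one_mul] at h
  rw [eq_inv_mul_of_mul_eq h, ← inv_pow, Int.units_inv_eq_self]

/-- Moving the last position to the front is a cyclic rotation, of sign `(-1) ^ m`. -/
theorem sign_of_apply_last_of_apply_castSucc {m : ℕ} {π : Perm (Fin (m + 1))} {j : Fin (m + 1)}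
    {e : Perm (Fin m)} (hl : π (Fin.last m) = j) (hs : ∀ k, π k.castSucc = j.succAbove (e k)) :
    sign π = (-1) ^ (m + (j : ℕ)) * sign e := by
  have h0 : (π * (finRotate (m + 1))⁻¹) 0 = j := by
    rw [Perm.mul_apply, Perm.inv_eq_iff_eq.mpr finRotate_last.symm, hl]
  have hs' : ∀ k, (π * (finRotate (m + 1))⁻¹) k.succ = j.succAbove (e k) := fun k => by
    rw [Perm.mul_apply, Perm.inv_eq_iff_eq.mpr (show k.succ = finRotate (m + 1) k.castSucc by simp),
      hs]
  have h := sign_of_apply_zero_of_apply_succ h0 hs'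
  rw [Perm.sign_mul, sign_inv, sign_finRotate, Nat.add_sub_cancel] at h
  rw [pow_add, mul_assoc, ← h, mul_left_comm, Int.units_mul_self, mul_one]

theorem exists_apply_succ_eq_succAbove {m : ℕ} (π : Perm (Fin (m + 1))) :
    ∃ e : Perm (Fin m), ∀ k, π k.succ = (π 0).succAbove (e k) := by
  set σ := (π 0).cycleRange * π
  have hσ0 : (decomposeFin σ).1 = 0 := by
    have h := decomposeFin_symm_apply_zero (decomposeFin σ).1 (decomposeFin σ).2
    rw [Prod.mk.eta, decomposeFin.symm_apply_apply] at h
    simp [← h, σ]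
  have hσ : decomposeFin.symm (0, (decomposeFin σ).2) = σ := by
    rw [← hσ0, Prod.mk.eta, decomposeFin.symm_apply_apply]
  refine ⟨(decomposeFin σ).2, fun k => ?_⟩
  have h := congrArg (· k.succ) hσ
  simp only [decomposeFin_symm_apply_succ, swap_self, refl_apply, σ, Perm.mul_apply] at h
  rw [← Fin.cycleRange_symm_succ, h, symm_apply_apply]

section Necklace

variable {p : ℕ} {T : Finset ℕ}

theorem isNeck_zero_singleton : IsNeck 0 {0} :=
  ⟨by simp, by simp, by simp⟩

theorem IsNeck.insert (hT : IsNeck p T) {i : ℕ} (hi : i ∈ Finset.range (p + 1)) :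
    IsNeck p (insert i T) :=
  ⟨Finset.insert_subset hi hT.1, Finset.mem_insert_of_mem hT.2.1,
    Finset.mem_insert_of_mem hT.2.2⟩

theorem cdim_insert_add_one {i : ℕ} (hi : i ∈ Finset.range (p + 1) \ T) :
    cdim p (insert i T) + 1 = cdim p T := by
  rw [cdim, Finset.sdiff_insert, Finset.card_erase_add_one hi]

theorem mem_of_cdim_eq_zero (h : cdim p T = 0) {i : ℕ} (hi : i ≤ p) : i ∈ T := by
  rw [cdim, Finset.card_eq_zero, Finset.sdiff_eq_empty_iff_subset] at h
  exact h (Finset.mem_range.mpr (Nat.lt_succ_of_le hi))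

end Necklace

section Uniqueness

variable {μ : LamFam}

/-- A necklace of dimension zero is spine collapsed onto `Δ⁰` by the constant map. -/
theorem apply_eq_one_of_cdim_eq_zero (hspine : CondSpineCollapse μ) (hunit : CondUnit μ)
    {p : ℕ} {T : Finset ℕ} (hT : IsNeck p T) (h0 : cdim p T = 0)
    (τ : Perm (Fin (cdim p T))) : μ p T hT τ = 1 := by
  rw [hspine p 0 T {0} hT isNeck_zero_singleton (fun _ => 0) monotoneOn_const rfl rfl
    (fun y hy => ⟨0, Nat.zero_le p, (Nat.le_zero.mp hy).symm⟩)
    (Finset.image_const ⟨0, hT.2.1⟩ 0).symm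
    (fun i hi _ => ⟨mem_of_cdim_eq_zero h0 hi.le, mem_of_cdim_eq_zero h0 hi⟩)
    (h0.trans (by decide)) τ]
  exact hunit _ _

/-- Every `π` is of the form `(j|θ)`, with `i_j = π(i_1)`. -/
theorem exists_insert_first_decomposition {p : ℕ} {T : Finset ℕ} (hT : IsNeck p T) {m : ℕ}
    (hm : cdim p T = m + 1) (π : Perm (Fin (cdim p T))) :
    ∃ (j0 : Fin (cdim p T)) (_ : IsNeck p (insert (en p T j0 : ℕ) T))
      (hm'' : cdim p (insert (en p T j0 : ℕ) T) = m)
      (θ : Perm (Fin (cdim p (insert (en p T j0 : ℕ) T)))),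
      ((finCongr hm).permCongr π) 0 = finCongr hm j0 ∧
      ∀ k : Fin m, ((finCongr hm).permCongr π) k.succ =
        (finCongr hm j0).succAbove (((finCongr hm'').permCongr θ) k) := by
  obtain ⟨e, he⟩ := exists_apply_succ_eq_succAbove ((finCongr hm).permCongr π)
  set j0 := (finCongr hm).symm ((finCongr hm).permCongr π 0)
  have hi := (en p T j0).2
  have hm'' : cdim p (insert (en p T j0 : ℕ) T) = m := by
    have := cdim_insert_add_one hi
    omega
  refine ⟨j0, hT.insert (Finset.mem_sdiff.mp hi).1, hm'', (finCongr hm'').permCongr.symm e,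
    by simp [j0], fun k => ?_⟩
  rw [Equiv.apply_symm_apply (finCongr hm'').permCongr e]
  simpa [j0] using he k

theorem eq_of_condSpineCollapse_of_condUnit_of_condInsert {ν : LamFam}
    (hμs : CondSpineCollapse μ) (hμu : CondUnit μ) (hμi : CondInsert μ)
    (hνs : CondSpineCollapse ν) (hνu : CondUnit ν) (hνi : CondInsert ν)
    (p : ℕ) (T : Finset ℕ) (hT : IsNeck p T) (τ : Perm (Fin (cdim p T))) :
    μ p T hT τ = ν p T hT τ := by
  suffices ∀ n p T (hT : IsNeck p T) (τ : Perm (Fin (cdim p T))),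
      cdim p T = n → μ p T hT τ = ν p T hT τ from this _ p T hT τ rfl
  intro n
  induction n with
  | zero =>
    intro p T hT τ h0
    rw [apply_eq_one_of_cdim_eq_zero hμs hμu hT h0, apply_eq_one_of_cdim_eq_zero hνs hνu hT h0]
  | succ m ih =>
    intro p T hT τ hm
    obtain ⟨j0, hT'', hm'', θ, h0, hs⟩ := exists_insert_first_decomposition hT hm τ
    rw [hμi p T hT m hm j0 hT'' hm'' θ τ h0 hs, hνi p T hT m hm j0 hT'' hm'' θ τ h0 hs,
      ih _ _ hT'' θ hm'']

end Uniqueness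

theorem condSpineCollapse_lamStd : CondSpineCollapse lamStd := by
  intro _ _ _ _ _ _ _ _ _ _ _ _ _ h τ
  simp only [lamStd, sign_permCongr, h]

theorem condWedge_lamStd : CondWedge lamStd := by
  intro _ _ _ _ _ _ _ h τ₁ τ₂
  simp only [lamStd, sign_permCongr, sign_sumCongr, ← h, pow_add, Units.val_mul]
  ring

theorem condUnit_lamStd : CondUnit lamStd := by
  intro _ τ
  have h0 : cdim 0 {0} = 0 := by decide
  have : Subsingleton (Fin (cdim 0 {0})) := by rw [h0]; infer_instance
  simp [lamStd, Subsingleton.elim τ 1, h0]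

theorem condSwap_lamStd : CondSwap lamStd := by
  intro _ _ _ τ a b hb
  simp only [lamStd, Perm.sign_mul, sign_swap (Fin.ne_of_val_ne (by omega) : a ≠ b),
    Units.val_mul, Units.val_neg, Units.val_one]
  ring

theorem condFace_lamStd : CondFace lamStd := by
  intro _ _ _ m hm j0 _ hm' ρ π hl hs
  have h := sign_of_apply_last_of_apply_castSucc hl hs
  rw [sign_permCongr, sign_permCongr] at h
  simp only [lamStd, hm, hm', h, Units.val_mul, Units.val_pow_eq_pow_val, Units.val_neg,
    Units.val_one, finCongr_apply, Fin.val_cast, pow_add]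
  ring

theorem condInsert_lamStd : CondInsert lamStd := by
  intro _ _ _ m hm j0 _ hm'' θ π h0 hs
  have h := sign_of_apply_zero_of_apply_succ h0 hs
  rw [sign_permCongr, sign_permCongr] at h
  simp only [lamStd, hm, hm'', h, Units.val_mul, Units.val_pow_eq_pow_val, Units.val_neg,
    Units.val_one, finCongr_apply, Fin.val_cast, pow_add]
  ring

theorem sys_lamStd : Sys lamStd :=
  ⟨condSpineCollapse_lamStd, condWedge_lamStd, condUnit_lamStd, condSwap_lamStd,
    condFace_lamStd, condInsert_lamStd⟩

/-- The coefficients `λ^T_τ = (-1)^{dim T} sgn(τ)` give the unique solution of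
the system (i)–(v). -/
theorem lambda_unique_solution :
    Sys lamStd ∧
      ∀ μ : LamFam, Sys μ →
        ∀ (p : ℕ) (T : Finset ℕ) (hT : IsNeck p T) (τ : Equiv.Perm (Fin (cdim p T))),
          μ p T hT τ = lamStd p T hT τ := by
  refine ⟨sys_lamStd, fun μ ⟨hspine, _, hunit, _, _, hinsert⟩ =>
    eq_of_condSpineCollapse_of_condUnit_of_condInsert hspine hunit hinsert
      condSpineCollapse_lamStd condUnit_lamStd condInsert_lamStd⟩
end
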